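/- Let L, U be the semi-infinite matrices with L(0,0)=1, L(n,n-1)=2/3, L(n,n)=1/3 for n ≥ 1 (zero otherwise), and U(n,n)=2/3, U(n,n+1)=1/3 for all n ≥ 0 (zero otherwise). Then the product L·U·U equals the matrix P with P(0,0)=P(0,1)=12/27, P(0,2)=3/27, and for n ≥ 1: P(n,n-1)=8/27, P(n,n)=12/27, P(n,n+1)=6/27, P(n,n+2)=1/27, all other entries zero. -/
import Mathlib
set_option maxHeartbeats 1000000


/-- Pure death lower factor. -/
noncomputable def Lmat (n m : ℕ) : ℝ :=
  if n = 0 then (if m = 0 then 1 else 0)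
  else if m + 1 = n then 2/3
  else if m = n then 1/3
  else 0

/-- Pure birth upper factor. -/
noncomputable def Umat (n m : ℕ) : ℝ :=
  if m = n then 2/3 else if m = n + 1 then 1/3 else 0

/-- Product of semi-infinite matrices. -/
noncomputable def matmul (A B : ℕ → ℕ → ℝ) (n m : ℕ) : ℝ := ∑' k, A n k * B k m

/-- The uniform type I Markov matrix for the hypergeometric tuple `(1/3, 2/3, 1/2, 1)`. -/
noncomputable def Pmat (n m : ℕ) : ℝ :=
  if n = 0 then
    (if m = 0 then 12/27 else if m = 1 then 12/27 else if m = 2 then 3/27 else 0)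
  else if m + 1 = n then 8/27
  else if m = n then 12/27
  else if m = n + 1 then 6/27
  else if m = n + 2 then 1/27
  else 0

noncomputable def LUmat (n m : ℕ) : ℝ :=
  if n = 0 then (if m = 0 then 2/3 else if m = 1 then 1/3 else 0)
  else if m + 1 = n then 4/9
  else if m = n then 4/9
  else if m = n + 1 then 1/9
  else 0

lemma tsum_pair' {f : ℕ → ℝ} (a b : ℕ) (hab : a ≠ b)
    (h : ∀ k, k ≠ a → k ≠ b → f k = 0) : ∑' k, f k = f a + f b := by
  rw [tsum_eq_sum (s := {a, b}) (by intro k hk; simp at hk; exact h k hk.1 hk.2)]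
  rw [Finset.sum_pair hab]

lemma tsum_triple' {f : ℕ → ℝ} (a b c : ℕ) (hab : a ≠ b) (hac : a ≠ c) (hbc : b ≠ c)
    (h : ∀ k, k ≠ a → k ≠ b → k ≠ c → f k = 0) : ∑' k, f k = f a + f b + f c := by
  rw [tsum_eq_sum (s := {a, b, c}) (by intro k hk; simp at hk; exact h k hk.1 hk.2.1 hk.2.2)]
  rw [Finset.sum_insert (by simp [hab, hac]), Finset.sum_pair hbc, add_assoc]

lemma LU_eq : ∀ n m : ℕ, matmul Lmat Umat n m = LUmat n m := by
  intro n m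
  unfold matmul
  cases n with
  | zero =>
    rw [tsum_eq_single 0 (by intro k hk; simp [Lmat, hk])]
    simp only [Lmat, Umat, LUmat]
    split_ifs <;> first | (exfalso; assumption) | omega | norm_num
  | succ n' =>
    rw [tsum_pair' n' (n' + 1) (by omega)
      (by intro k h1 h2; simp only [Lmat]; split_ifs <;> first | (exfalso; assumption) | omega | ring)]
    simp only [Lmat, Umat, LUmat]
    split_ifs <;> first | (exfalso; assumption) | omega | norm_num

theorem stmt19 : ∀ n m : ℕ, matmul (matmul Lmat Umat) Umat n m = Pmat n m := by
  intro n m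
  have key : matmul (matmul Lmat Umat) Umat n m = matmul LUmat Umat n m := by
    unfold matmul
    congr 1; funext k; rw [show (∑' j, Lmat n j * Umat j k) = matmul Lmat Umat n k from rfl,
      LU_eq]
  rw [key]
  unfold matmul
  cases n with
  | zero =>
    rw [tsum_pair' 0 1 (by omega)
      (by intro k h1 h2; simp only [LUmat]; split_ifs <;> first | (exfalso; assumption) | omega | ring)]
    simp only [LUmat, Umat, Pmat]
    split_ifs <;> first | (exfalso; assumption) | omega | norm_num
  | succ n' =>
    rw [tsum_triple' n' (n' + 1) (n' + 2) (by omega) (by omega) (by omega)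
      (by intro k h1 h2 h3; simp only [LUmat]; split_ifs <;> first | (exfalso; assumption) | omega | ring)]
    simp only [LUmat, Umat, Pmat]
    split_ifs <;> first | (exfalso; assumption) | omega | norm_num
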